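/- For an invertible n×n complex matrix A (n ≥ 2), the spectral distortion SD(A) = |det A|^{1/n}/σ_min(A) satisfies SD(A) ≤ (‖A‖_F²/(n-1))^{(n-1)/2} · |det A|^{(1-n)/n}. -/

import Mathlib

/-!
The singular values squared are the eigenvalues `μ₁, …, μₙ` of `Aᴴ * A`: they are nonnegative,
their sum is `‖A‖_F²` and their product is `|det A|²`. Singling out the smallest one, AM-GM on the
remaining `n - 1` gives `|det A|² ≤ μ_min (‖A‖_F² / (n - 1))^(n - 1)`, which is the Yu–Gu bound;
multiplying its square root by `|det A|^((1-n)/n) / σ_min` gives the estimate.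
-/

open Finset Matrix

/-- The smallest singular value of a square complex matrix. -/
noncomputable def sigmaMin {n : ℕ} (A : Matrix (Fin n) (Fin n) ℂ) : ℝ :=
  Real.sqrt (⨅ i, (Matrix.isHermitian_conjTranspose_mul_self A).eigenvalues i)

namespace Real

lemma prod_le_sum_div_card_pow {ι : Type*} (s : Finset ι) {f : ι → ℝ} (hf : ∀ i ∈ s, 0 ≤ f i) :
    ∏ i ∈ s, f i ≤ ((∑ i ∈ s, f i) / #s) ^ #s := by
  rcases s.eq_empty_or_nonempty with rfl | hs
  · simp
  have hcard : (0 : ℝ) < #s := by exact_mod_cast hs.card_pos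
  have hw : ∑ _i ∈ s, (#s : ℝ)⁻¹ = 1 := by
    rw [sum_const, nsmul_eq_mul, mul_inv_cancel₀ hcard.ne']
  have amgm := geom_mean_le_arith_mean_weighted s (fun _ => (#s : ℝ)⁻¹) f
    (fun _ _ => inv_nonneg.mpr hcard.le) hw hf
  rw [← mul_sum, inv_mul_eq_div] at amgm
  calc ∏ i ∈ s, f i = (∏ i ∈ s, f i ^ (#s : ℝ)⁻¹) ^ #s := by
        rw [← prod_pow]
        refine prod_congr rfl fun i hi => ?_
        rw [← rpow_natCast, ← rpow_mul (hf i hi), inv_mul_cancel₀ hcard.ne', rpow_one]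
    _ ≤ ((∑ i ∈ s, f i) / #s) ^ #s :=
        pow_le_pow_left₀ (prod_nonneg fun i hi => rpow_nonneg (hf i hi) _) amgm _

lemma prod_le_mul_sum_div_pow {ι : Type*} [Fintype ι] [DecidableEq ι] {f : ι → ℝ}
    (hf : ∀ i, 0 ≤ f i) (i₀ : ι) :
    ∏ i, f i ≤ f i₀ * ((∑ i, f i) / (Fintype.card ι - 1 : ℕ)) ^ (Fintype.card ι - 1) := by
  have hcard : #(univ.erase i₀) = Fintype.card ι - 1 := card_erase_of_mem (mem_univ i₀)
  rw [← mul_prod_erase univ f (mem_univ i₀), ← hcard]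
  refine mul_le_mul_of_nonneg_left ((prod_le_sum_div_card_pow _ fun i _ => hf i).trans ?_) (hf i₀)
  gcongr
  · exact div_nonneg (sum_nonneg fun i _ => hf i) (Nat.cast_nonneg _)
  · exact fun i _ _ => hf i
  · exact erase_subset _ _

end Real

namespace Matrix

variable {𝕜 : Type*} [RCLike 𝕜] {m n : Type*} [Fintype m] [Fintype n]

lemma trace_conjTranspose_mul_self (A : Matrix m n 𝕜) :
    (Aᴴ * A).trace = ((∑ i, ∑ j, ‖A i j‖ ^ 2 : ℝ) : 𝕜) := by
  simp only [trace, diag_apply, mul_apply, conjTranspose_apply, RCLike.star_def, RCLike.conj_mul]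
  push_cast
  exact sum_comm

lemma sum_eigenvalues_conjTranspose_mul_self [DecidableEq n] (A : Matrix m n 𝕜) :
    ∑ i, (isHermitian_conjTranspose_mul_self A).eigenvalues i = ∑ i, ∑ j, ‖A i j‖ ^ 2 := by
  have htrace := (isHermitian_conjTranspose_mul_self A).trace_eq_sum_eigenvalues
  rw [trace_conjTranspose_mul_self] at htrace
  exact_mod_cast htrace.symm

lemma prod_eigenvalues_conjTranspose_mul_self [DecidableEq n] (A : Matrix n n 𝕜) :
    ∏ i, (isHermitian_conjTranspose_mul_self A).eigenvalues i = ‖A.det‖ ^ 2 := by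
  have hdet := (isHermitian_conjTranspose_mul_self A).det_eq_prod_eigenvalues
  rw [det_mul, det_conjTranspose, RCLike.star_def, RCLike.conj_mul] at hdet
  exact_mod_cast hdet.symm

end Matrix

lemma exists_sigmaMin_eq_sqrt_eigenvalue {n : ℕ} [NeZero n] (A : Matrix (Fin n) (Fin n) ℂ) :
    ∃ i, sigmaMin A = √((isHermitian_conjTranspose_mul_self A).eigenvalues i) := by
  obtain ⟨i, hi⟩ := exists_eq_ciInf_of_finite
    (f := (isHermitian_conjTranspose_mul_self A).eigenvalues)
  exact ⟨i, by rw [sigmaMin, hi]⟩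

theorem norm_det_le_sigmaMin_mul {n : ℕ} [NeZero n] (A : Matrix (Fin n) (Fin n) ℂ) :
    ‖A.det‖ ≤ sigmaMin A *
      ((∑ i, ∑ j, ‖A i j‖ ^ 2) / ((n : ℝ) - 1)) ^ (((n : ℝ) - 1) / 2) := by
  set μ := (isHermitian_conjTranspose_mul_self A).eigenvalues
  have hμ : ∀ i, 0 ≤ μ i := eigenvalues_conjTranspose_mul_self_nonneg A
  obtain ⟨i, hi⟩ := exists_sigmaMin_eq_sqrt_eigenvalue A
  have hsq := Real.prod_le_mul_sum_div_pow hμ i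
  rw [prod_eigenvalues_conjTranspose_mul_self, sum_eigenvalues_conjTranspose_mul_self,
    Fintype.card_fin, Nat.cast_pred (Nat.pos_of_neZero n)] at hsq
  set x := (∑ i, ∑ j, ‖A i j‖ ^ 2) / ((n : ℝ) - 1)
  have hx : 0 ≤ x := div_nonneg (by positivity) (sub_nonneg.mpr (by exact_mod_cast NeZero.one_le))
  calc ‖A.det‖ = √(‖A.det‖ ^ 2) := (Real.sqrt_sq (norm_nonneg _)).symm
    _ ≤ √(μ i * x ^ (n - 1)) := Real.sqrt_le_sqrt hsq
    _ = sigmaMin A * x ^ (((n : ℝ) - 1) / 2) := by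
      rw [Real.sqrt_mul (hμ i), ← hi, Real.sqrt_eq_rpow, ← Real.rpow_natCast,
        ← Real.rpow_mul hx, Nat.cast_pred (Nat.pos_of_neZero n), mul_one_div]

theorem spectral_distortion_upper_bound_general (n : ℕ) (hn : 2 ≤ n)
    (A : Matrix (Fin n) (Fin n) ℂ) :
    ‖A.det‖ ^ ((1 : ℝ) / (n : ℝ)) / sigmaMin A ≤
      ((∑ i, ∑ j, ‖A i j‖ ^ 2) / ((n : ℝ) - 1)) ^ (((n : ℝ) - 1) / 2) *
        ‖A.det‖ ^ ((1 - (n : ℝ)) / (n : ℝ)) := by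
  have : NeZero n := ⟨by omega⟩
  have hn0 : (n : ℝ) ≠ 0 := by exact_mod_cast NeZero.ne n
  have hsplit : ‖A.det‖ ^ ((1 : ℝ) / n) = ‖A.det‖ * ‖A.det‖ ^ ((1 - (n : ℝ)) / n) := by
    rw [← Real.rpow_one_add' (norm_nonneg _) (by field_simp; simpa using hn0)]
    congr 1
    field_simp
    ring
  have hyugu := norm_det_le_sigmaMin_mul A
  set x := (∑ i, ∑ j, ‖A i j‖ ^ 2) / ((n : ℝ) - 1)
  have hx : 0 ≤ x := div_nonneg (by positivity) (sub_nonneg.mpr (by exact_mod_cast NeZero.one_le))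
  rw [hsplit]
  refine div_le_of_le_mul₀ (Real.sqrt_nonneg _) (by positivity) ?_
  calc ‖A.det‖ * ‖A.det‖ ^ ((1 - (n : ℝ)) / n)
      ≤ sigmaMin A * x ^ (((n : ℝ) - 1) / 2) * ‖A.det‖ ^ ((1 - (n : ℝ)) / n) := by gcongr
    _ = x ^ (((n : ℝ) - 1) / 2) * ‖A.det‖ ^ ((1 - (n : ℝ)) / n) * sigmaMin A := by ring

/-- For an invertible `n×n` complex matrix `A` (`n ≥ 2`), the spectral distortion
`SD(A) = |det A|^{1/n} / σ_min(A)` satisfies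
`SD(A) ≤ (‖A‖_F²/(n-1))^((n-1)/2) · |det A|^((1-n)/n)`, where
`‖A‖_F² = Σᵢⱼ |aᵢⱼ|²` is the squared Frobenius norm. -/
theorem spectral_distortion_upper_bound (n : ℕ) (hn : 2 ≤ n)
    (A : Matrix (Fin n) (Fin n) ℂ) (hA : IsUnit A.det) :
    ‖A.det‖ ^ ((1 : ℝ) / (n : ℝ)) / sigmaMin A ≤
      ((∑ i, ∑ j, ‖A i j‖ ^ 2) / ((n : ℝ) - 1)) ^ (((n : ℝ) - 1) / 2) *
        ‖A.det‖ ^ ((1 - (n : ℝ)) / (n : ℝ)) :=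
  spectral_distortion_upper_bound_general n hn A
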